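/- (Set-likeness of E.) Let ⟨f,a⟩, ⟨g,b⟩ ∈ Π with ⟨f,a⟩ E ⟨g,b⟩, and put s := ⋃{g(v) : v ∈ dom(g)} (the union of the range of g; note s ∉ s by regularity). Then there exists f₀ ∈ 𝓕 with dom(f₀) = dom(f) such that f₀(u) ∈ s ∪ {s} for every u ∈ dom(f₀), and ⟨f₀, a⟩ ∼ ⟨f, a⟩. In particular, every E-predecessor of ⟨g,b⟩/∼ in Π/∼ has a representative whose first coordinate takes values in the fixed set s ∪ {s}. (Claim 3.3.4 (2).) -/

import Mathlib

open FirstOrder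
open scoped ZFSet

/-- The language `L_ε` with a single binary relation symbol (Mathlib's graph language,
whose unique binary relation we interpret as membership). -/
abbrev Lε : FirstOrder.Language := FirstOrder.Language.graph

/-- Any type with a binary relation is an `L_ε`-structure. -/
def memStruc (S : Type*) (r : S → S → Prop) : Lε.Structure S where
  RelMap | .adj => fun x => r (x 0) (x 1)

/-- Satisfaction of an `L_ε`-formula in the structure given by a binary relation `r` on `S`. -/
def RealizeIn (S : Type*) (r : S → S → Prop) {n : ℕ}
    (φ : Lε.Formula (Fin n)) (v : Fin n → S) : Prop :=
  @FirstOrder.Language.Formula.Realize Lε S (memStruc S r) _ φ v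

/-- `f` is a ZFSet-function: a single-valued set of (Kuratowski) ordered pairs. -/
def IsZFFunc (f : ZFSet) : Prop :=
  (∀ p ∈ f, ∃ x y : ZFSet, p = ZFSet.pair x y) ∧
    ∀ x y y' : ZFSet, ZFSet.pair x y ∈ f → ZFSet.pair x y' ∈ f → y = y'

/-- The domain of a ZFSet-function. -/
def dom (f : ZFSet) : ZFSet :=
  ZFSet.sep (fun x => ∃ y : ZFSet, ZFSet.pair x y ∈ f) (⋃₀ ⋃₀ f)

/-- `f` is a ZFSet-function with domain `I`. -/
def IsFuncOn (I f : ZFSet) : Prop := IsZFFunc f ∧ dom f = I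

open Classical in
/-- The value `f(x)` of a ZFSet-function at `x`. -/
noncomputable def app (f x : ZFSet) : ZFSet :=
  if h : ∃ y : ZFSet, ZFSet.pair x y ∈ f then h.choose else ∅

/-- The `n`-tuple `⟨u₀,…,u_{n-1}⟩` coded as iterated Kuratowski pairs. -/
def tup : {n : ℕ} → (Fin n → ZFSet) → ZFSet
  | 0, _ => ∅
  | _ + 1, v => ZFSet.pair (v 0) (tup (Fin.tail v))

/-- The `n`-fold cartesian product `d 0 × ⋯ × d (n-1)` of ZFSets (as a set of `tup`s). -/
def nprod : {n : ℕ} → (Fin n → ZFSet) → ZFSet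
  | 0, _ => {∅}
  | _ + 1, d => ZFSet.prod (d 0) (nprod (Fin.tail d))

/-- The formula `x₀ = x₁` of `L_ε`. -/
def eqFm : Lε.Formula (Fin 2) :=
  FirstOrder.Language.Term.equal (FirstOrder.Language.Term.var 0)
    (FirstOrder.Language.Term.var 1)

/-- The formula `x₀ ε x₁` of `L_ε`. -/
def memFm : Lε.Formula (Fin 2) :=
  FirstOrder.Language.Relations.formula₂ FirstOrder.Language.adj
    (FirstOrder.Language.Term.var 0) (FirstOrder.Language.Term.var 1)

/-- `S_{φ(f₀(x₀),…,f_{n-1}(x_{n-1}))}`: the ZFSet of tuples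
`⟨u₀,…,u_{n-1}⟩ ∈ dom f₀ × ⋯ × dom f_{n-1}` such that `φ(f₀(u₀),…,f_{n-1}(u_{n-1}))`
holds in `(ZFSet, ∈)`. -/
def Sset {n : ℕ} (φ : Lε.Formula (Fin n)) (f : Fin n → ZFSet) : ZFSet :=
  ZFSet.sep
    (fun t => ∃ u : Fin n → ZFSet, t = tup u ∧ (∀ i : Fin n, u i ∈ dom (f i)) ∧
      RealizeIn ZFSet (· ∈ ·) φ (fun i => app (f i) (u i)))
    (nprod (fun i => dom (f i)))

/-- `⟨f,a⟩ ∼ ⟨g,b⟩ :⟺ ⟨a,b⟩ ∈ j₀(S_{f(x)=g(y)})`. -/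
def simP (j₀ : ZFSet → ZFSet) (f a g b : ZFSet) : Prop :=
  tup ![a, b] ∈ j₀ (Sset eqFm ![f, g])

/-- `⟨f,a⟩ E ⟨g,b⟩ :⟺ ⟨a,b⟩ ∈ j₀(S_{f(x) ε g(y)})`. -/
def EP (j₀ : ZFSet → ZFSet) (f a g b : ZFSet) : Prop :=
  tup ![a, b] ∈ j₀ (Sset memFm ![f, g])

/-- The pair `⟨f,a⟩` belongs to `Π`: `f` is a ZFSet-function whose domain lies in `A`,
and `a ∈ j₀(dom f)`. -/
def PiP (A : ZFSet) (j₀ : ZFSet → ZFSet) (f a : ZFSet) : Prop :=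
  IsZFFunc f ∧ dom f ∈ A ∧ a ∈ j₀ (dom f)

/-- The collection `Π`. -/
abbrev PiT (A : ZFSet) (j₀ : ZFSet → ZFSet) := {p : ZFSet × ZFSet // PiP A j₀ p.1 p.2}

/-- `∼` as a relation on `Π`. -/
def simT (A : ZFSet) (j₀ : ZFSet → ZFSet) (p q : PiT A j₀) : Prop :=
  simP j₀ p.1.1 p.1.2 q.1.1 q.1.2

/-- The quotient `Π/∼`. -/
def QPi (A : ZFSet) (j₀ : ZFSet → ZFSet) := Quot (simT A j₀)

/-- The relation `E` induced on `Π/∼`: two classes are `E`-related iff they have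
`E`-related representatives (for a congruence this is the usual induced relation). -/
def EQPi (A : ZFSet) (j₀ : ZFSet → ZFSet) (x y : QPi A j₀) : Prop :=
  ∃ p q : PiT A j₀, x = Quot.mk (simT A j₀) p ∧ y = Quot.mk (simT A j₀) q ∧
    EP j₀ p.1.1 p.1.2 q.1.1 q.1.2

/-- The range of a ZFSet-function. -/
def rng (f : ZFSet) : ZFSet :=
  ZFSet.sep (fun y => ∃ x : ZFSet, ZFSet.pair x y ∈ f) (⋃₀ ⋃₀ f)


/-!
Take `f₀ u := f u` when `f u ∈ s` and `f₀ u := s` otherwise. If `⟨u, w⟩ ∈ S_{f(x) ε g(y)}` then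
`f u ∈ g w ⊆ s`, so `f₀ u = f u`, i.e. `⟨u, u⟩ ∈ S_{f₀(x) = f(y)}`. Since Kuratowski pairs are
first-order definable, and absolutely so in transitive sets, this inclusion is a first-order
property of the two parameters `S_{f(x) ε g(y)}, S_{f₀(x) = f(y)} ∈ A`; elementarity carries it to
`j₀` of them in `N`, and `⟨a, b⟩ ∈ j₀ S_{f(x) ε g(y)}` then yields `⟨a, a⟩ ∈ j₀ S_{f₀(x) = f(y)}`.
-/

theorem mem_dom_iff {f x : ZFSet} : x ∈ dom f ↔ ∃ y, ZFSet.pair x y ∈ f := by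
  refine ZFSet.mem_sep.trans ⟨And.right, fun ⟨y, hy⟩ => ⟨?_, y, hy⟩⟩
  exact ZFSet.mem_sUnion_of_mem (ZFSet.mem_singleton.mpr rfl)
    (ZFSet.mem_sUnion_of_mem (by simp [ZFSet.pair]) hy)

theorem mem_rng_of_pair_mem {f x y : ZFSet} (h : ZFSet.pair x y ∈ f) : y ∈ rng f := by
  refine ZFSet.mem_sep.mpr ⟨?_, x, h⟩
  exact ZFSet.mem_sUnion_of_mem (ZFSet.mem_pair.mpr (Or.inr rfl))
    (ZFSet.mem_sUnion_of_mem (show {x, y} ∈ ZFSet.pair x y by simp [ZFSet.pair]) h)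

theorem app_eq_of_pair_mem {f x y : ZFSet} (hf : IsZFFunc f) (h : ZFSet.pair x y ∈ f) :
    app f x = y := by
  have hex : ∃ y, ZFSet.pair x y ∈ f := ⟨y, h⟩
  rw [app, dif_pos hex]
  exact hf.2 x _ y hex.choose_spec h

theorem app_mem_rng {f x : ZFSet} (hf : IsZFFunc f) (hx : x ∈ dom f) : app f x ∈ rng f := by
  obtain ⟨y, hy⟩ := mem_dom_iff.mp hx
  rw [app_eq_of_pair_mem hf hy]
  exact mem_rng_of_pair_mem hy

noncomputable def graphOn (d : ZFSet) (h : ZFSet → ZFSet) : ZFSet :=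
  @ZFSet.map h (Classical.allZFSetDefinable _) d

theorem mem_graphOn {d q : ZFSet} {h : ZFSet → ZFSet} :
    q ∈ graphOn d h ↔ ∃ x ∈ d, ZFSet.pair x (h x) = q :=
  @ZFSet.mem_map h (Classical.allZFSetDefinable _) d q

theorem pair_mem_graphOn {d x y : ZFSet} {h : ZFSet → ZFSet} :
    ZFSet.pair x y ∈ graphOn d h ↔ x ∈ d ∧ h x = y := by
  simp [mem_graphOn]

theorem isZFFunc_graphOn (d : ZFSet) (h : ZFSet → ZFSet) : IsZFFunc (graphOn d h) := by
  refine ⟨fun q hq => ?_, fun x y y' hy hy' => ?_⟩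
  · obtain ⟨x, -, rfl⟩ := mem_graphOn.mp hq
    exact ⟨x, h x, rfl⟩
  · exact (pair_mem_graphOn.mp hy).2.symm.trans (pair_mem_graphOn.mp hy').2

theorem dom_graphOn {d : ZFSet} {h : ZFSet → ZFSet} : dom (graphOn d h) = d :=
  ZFSet.ext fun x => by simp [mem_dom_iff, pair_mem_graphOn]

theorem app_graphOn {d x : ZFSet} {h : ZFSet → ZFSet} (hx : x ∈ d) :
    app (graphOn d h) x = h x :=
  app_eq_of_pair_mem (isZFFunc_graphOn d h) (pair_mem_graphOn.mpr ⟨hx, rfl⟩)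

open Classical in
noncomputable def clip (f s : ZFSet) : ZFSet :=
  graphOn (dom f) fun u => if app f u ∈ s then app f u else s

theorem app_clip_mem {f s u : ZFSet} (hu : u ∈ dom (clip f s)) : app (clip f s) u ∈ s ∪ {s} := by
  rw [clip, dom_graphOn] at hu
  rw [clip, app_graphOn hu, ZFSet.mem_union, ZFSet.mem_singleton]
  split_ifs with h
  exacts [Or.inl h, Or.inr rfl]

theorem app_clip_of_mem {f s u : ZFSet} (hu : u ∈ dom f) (h : app f u ∈ s) :
    app (clip f s) u = app f u := by
  rw [clip, app_graphOn hu, if_pos h]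

theorem ZFSet.IsTransitive.empty_mem {M x : ZFSet} (hM : M.IsTransitive) (hx : x ∈ M) :
    ∅ ∈ M := by
  obtain ⟨y, hy, hMy⟩ := ZFSet.regularity M fun h => ZFSet.notMem_empty x (h ▸ hx)
  have hy_empty : y = ∅ := (ZFSet.eq_empty y).mpr fun z hz =>
    ZFSet.notMem_empty z (hMy ▸ ZFSet.mem_inter.mpr ⟨hM.mem_trans hz hy, hz⟩)
  exact hy_empty ▸ hy

theorem ZFSet.IsTransitive.mem_of_pair_mem {M x y : ZFSet} (hM : M.IsTransitive)
    (h : ZFSet.pair x y ∈ M) : x ∈ M ∧ y ∈ M := by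
  have hxy : ({x, y} : ZFSet) ∈ M := hM.mem_trans (by simp [ZFSet.pair]) h
  exact ⟨hM.mem_trans (by simp) hxy, hM.mem_trans (by simp) hxy⟩

theorem ZFSet.eq_pair_iff {q u t : ZFSet} : q = ZFSet.pair u t ↔
    (∀ z ∈ q, z = {u} ∨ z = {u, t}) ∧ {u} ∈ q ∧ {u, t} ∈ q := by
  refine ⟨fun h => by simp [h, ZFSet.pair], fun ⟨h, hu, hut⟩ => ZFSet.ext fun z => ?_⟩
  simp only [ZFSet.pair, ZFSet.mem_insert_iff, ZFSet.mem_singleton]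
  exact ⟨h z, by rintro (rfl | rfl) <;> assumption⟩

theorem tup_two (x y : ZFSet) : tup ![x, y] = ZFSet.pair x (ZFSet.pair y ∅) := rfl

theorem tup_injective : ∀ {n : ℕ}, Function.Injective (tup : (Fin n → ZFSet) → ZFSet)
  | 0, _, _, _ => Subsingleton.elim _ _
  | _ + 1, u, w, h => by
    obtain ⟨h0, htail⟩ := ZFSet.pair_inj.mp h
    rw [← Fin.cons_self_tail u, ← Fin.cons_self_tail w, h0, tup_injective htail]

theorem tup_mem_nprod : ∀ {n : ℕ} {u d : Fin n → ZFSet}, (∀ i, u i ∈ d i) → tup u ∈ nprod d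
  | 0, _, _, _ => ZFSet.mem_singleton.mpr rfl
  | _ + 1, _, _, h => ZFSet.pair_mem_prod.mpr ⟨h 0, tup_mem_nprod fun i => h i.succ⟩

theorem nprod_mem {A : ZFSet} (h₀ : {∅} ∈ A) (hprod : ∀ a ∈ A, ∀ b ∈ A, ZFSet.prod a b ∈ A) :
    ∀ {n : ℕ} {d : Fin n → ZFSet}, (∀ i, d i ∈ A) → nprod d ∈ A
  | 0, _, _ => h₀
  | _ + 1, _, h => hprod _ (h 0) _ (nprod_mem h₀ hprod fun i => h i.succ)

theorem tup_mem_Sset {n : ℕ} {φ : Lε.Formula (Fin n)} {f u : Fin n → ZFSet} :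
    tup u ∈ Sset φ f ↔
      (∀ i, u i ∈ dom (f i)) ∧ RealizeIn ZFSet (· ∈ ·) φ (fun i => app (f i) (u i)) := by
  refine ZFSet.mem_sep.trans ⟨?_, fun h => ⟨tup_mem_nprod h.1, u, rfl, h⟩⟩
  rintro ⟨-, w, hw, hdom, hφ⟩
  obtain rfl := tup_injective hw
  exact ⟨hdom, hφ⟩

theorem Sset_mem {A : ZFSet} (h₀ : {∅} ∈ A) (hprod : ∀ a ∈ A, ∀ b ∈ A, ZFSet.prod a b ∈ A)
    (hsub : ∀ s a : ZFSet, a ∈ A → s ⊆ a → s ∈ A) {n : ℕ} (φ : Lε.Formula (Fin n))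
    {f : Fin n → ZFSet} (hf : ∀ i, dom (f i) ∈ A) : Sset φ f ∈ A :=
  hsub _ _ (nprod_mem h₀ hprod hf) fun _ ht => (ZFSet.mem_sep.mp ht).1

theorem realizeIn_eqFm {S : Type*} (r : S → S → Prop) (v : Fin 2 → S) :
    RealizeIn S r eqFm v ↔ v 0 = v 1 :=
  @FirstOrder.Language.Formula.realize_equal Lε S (memStruc S r) _ _ _ _

theorem realizeIn_memFm {S : Type*} (r : S → S → Prop) (v : Fin 2 → S) :
    RealizeIn S r memFm v ↔ r (v 0) (v 1) :=
  @FirstOrder.Language.Formula.realize_rel₂ Lε S (memStruc S r) _ _ _ _ _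

theorem tup_diag_mem_Sset_eqFm_clip {f g u w : ZFSet} (hg : IsZFFunc g)
    (h : tup ![u, w] ∈ Sset memFm ![f, g]) :
    tup ![u, u] ∈ Sset eqFm ![clip f (⋃₀ rng g), f] := by
  obtain ⟨hdom, hmem⟩ := tup_mem_Sset.mp h
  have hu : u ∈ dom f := hdom 0
  have hfu : app f u ∈ ⋃₀ rng g :=
    ZFSet.mem_sUnion_of_mem ((realizeIn_memFm _ _).mp hmem) (app_mem_rng hg (hdom 1))
  refine tup_mem_Sset.mpr ⟨Fin.forall_fin_two.mpr ⟨dom_graphOn.symm ▸ hu, hu⟩, ?_⟩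
  exact (realizeIn_eqFm _ _).mpr (app_clip_of_mem hu hfu)

namespace ZFFormula

open FirstOrder.Language

variable {α : Type*} {k : ℕ}

def memB (i j : α ⊕ Fin k) : Lε.BoundedFormula α k :=
  Relations.boundedFormula₂ adj (Term.var i) (Term.var j)

def eqB (i j : α ⊕ Fin k) : Lε.BoundedFormula α k := Term.var i =' Term.var j

def lift : α ⊕ Fin k → α ⊕ Fin (k + 1) := Sum.map id Fin.castSucc

def newVar (α : Type*) (k : ℕ) : α ⊕ Fin (k + 1) := Sum.inr (Fin.last k)

def singletonFm (z u : α ⊕ Fin k) : Lε.BoundedFormula α k :=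
  ∀' (memB (newVar α k) (lift z) ⇔ eqB (newVar α k) (lift u))

def doubletonFm (z u t : α ⊕ Fin k) : Lε.BoundedFormula α k :=
  ∀' (memB (newVar α k) (lift z) ⇔ (eqB (newVar α k) (lift u) ⊔ eqB (newVar α k) (lift t)))

/-- `∀ z, z ∈ q ↔ z = {u} ∨ z = {u, t}` would not do: the quantifier ranges over a transitive set,
which need not contain `{u}` or `{u, t}`. -/
def pairFm (q u t : α ⊕ Fin k) : Lε.BoundedFormula α k :=
  ∀' (memB (newVar α k) (lift q) ⟹
      (singletonFm (newVar α k) (lift u) ⊔ doubletonFm (newVar α k) (lift u) (lift t))) ⊓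
    ∃' (memB (newVar α k) (lift q) ⊓ singletonFm (newVar α k) (lift u)) ⊓
    ∃' (memB (newVar α k) (lift q) ⊓ doubletonFm (newVar α k) (lift u) (lift t))

def emptyFm (z : α ⊕ Fin k) : Lε.BoundedFormula α k :=
  ∀' ∼(memB (newVar α k) (lift z))

def tupTwoFm (p u w : α ⊕ Fin k) : Lε.BoundedFormula α k :=
  ∃' ∃' (pairFm (lift (lift p)) (lift (lift u)) (lift (newVar α k)) ⊓
    pairFm (lift (newVar α k)) (lift (lift w)) (newVar α (k + 1)) ⊓
    emptyFm (newVar α (k + 1)))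

def fstDiagFm : Lε.Formula (Fin 2) :=
  ∀' ∀' ∀' (memB (Sum.inr 2) (Sum.inl 0) ⊓ tupTwoFm (Sum.inr 2) (Sum.inr 0) (Sum.inr 1) ⟹
    ∃' (memB (Sum.inr 3) (Sum.inl 1) ⊓ tupTwoFm (Sum.inr 3) (Sum.inr 0) (Sum.inr 0)))

@[simp]
theorem elim_snoc_lift {M : Type*} (v : α → M) (xs : Fin k → M) (x : M) (i : α ⊕ Fin k) :
    Sum.elim v (Fin.snoc xs x) (lift i) = Sum.elim v xs i := by
  cases i <;> simp [lift]

@[simp]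
theorem elim_snoc_newVar {M : Type*} (v : α → M) (xs : Fin k → M) (x : M) :
    Sum.elim v (Fin.snoc xs x) (newVar α k) = x := by
  simp [newVar]


instance memStructure (M : ZFSet) : Lε.Structure {x : ZFSet // x ∈ M} :=
  memStruc _ fun a b => a.1 ∈ b.1

section Transitive

variable {M : ZFSet} {v : α → {x : ZFSet // x ∈ M}} {xs : Fin k → {x : ZFSet // x ∈ M}}

theorem forall_subtype_mem_iff (hM : M.IsTransitive) {z : ZFSet} (hz : z ∈ M)
    (P : ZFSet → Prop) : (∀ w : {x // x ∈ M}, w.1 ∈ z → P w.1) ↔ ∀ w ∈ z, P w :=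
  ⟨fun h w hw => h ⟨w, hM.mem_trans hw hz⟩ hw, fun h w hw => h w.1 hw⟩

theorem exists_subtype_mem_iff (hM : M.IsTransitive) {z : ZFSet} (hz : z ∈ M)
    (P : ZFSet → Prop) : (∃ w : {x // x ∈ M}, w.1 ∈ z ∧ P w.1) ↔ ∃ w ∈ z, P w :=
  ⟨fun ⟨w, hw, h⟩ => ⟨w.1, hw, h⟩, fun ⟨w, hw, h⟩ => ⟨⟨w, hM.mem_trans hw hz⟩, hw, h⟩⟩

theorem forall_subtype_mem_iff_eq (hM : M.IsTransitive) {z y : ZFSet} (hz : z ∈ M)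
    (hy : ∀ w ∈ y, w ∈ M) : (∀ w : {x // x ∈ M}, w.1 ∈ z ↔ w.1 ∈ y) ↔ z = y := by
  refine ⟨fun h => ZFSet.ext fun w => ?_, fun h w => h ▸ Iff.rfl⟩
  exact ⟨fun hw => h ⟨w, hM.mem_trans hw hz⟩ |>.mp hw, fun hw => h ⟨w, hy w hw⟩ |>.mpr hw⟩

@[simp]
theorem realize_memB (i j : α ⊕ Fin k) :
    (memB i j).Realize v xs ↔ (Sum.elim v xs i).1 ∈ (Sum.elim v xs j).1 := by
  rw [memB, BoundedFormula.realize_rel₂]; rfl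

@[simp]
theorem realize_eqB (i j : α ⊕ Fin k) :
    (eqB i j).Realize v xs ↔ (Sum.elim v xs i).1 = (Sum.elim v xs j).1 := by
  rw [eqB, BoundedFormula.realize_bdEqual, Term.realize_var, Term.realize_var, Subtype.ext_iff]

theorem realize_singletonFm (hM : M.IsTransitive) (z u : α ⊕ Fin k) :
    (singletonFm z u).Realize v xs ↔ (Sum.elim v xs z).1 = {(Sum.elim v xs u).1} := by
  rw [← forall_subtype_mem_iff_eq hM (Sum.elim v xs z).2 (by simp)]
  simp [singletonFm]

theorem realize_doubletonFm (hM : M.IsTransitive) (z u t : α ⊕ Fin k) :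
    (doubletonFm z u t).Realize v xs ↔
      (Sum.elim v xs z).1 = {(Sum.elim v xs u).1, (Sum.elim v xs t).1} := by
  rw [← forall_subtype_mem_iff_eq hM (Sum.elim v xs z).2 (by simp)]
  simp [doubletonFm]

theorem realize_pairFm (hM : M.IsTransitive) (q u t : α ⊕ Fin k) :
    (pairFm q u t).Realize v xs ↔
      (Sum.elim v xs q).1 = ZFSet.pair (Sum.elim v xs u).1 (Sum.elim v xs t).1 := by
  have hq := (Sum.elim v xs q).2
  simp only [pairFm, BoundedFormula.realize_inf, BoundedFormula.realize_all,
    BoundedFormula.realize_ex, BoundedFormula.realize_imp, BoundedFormula.realize_sup,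
    realize_memB, realize_singletonFm hM, realize_doubletonFm hM, elim_snoc_lift,
    elim_snoc_newVar]
  rw [forall_subtype_mem_iff hM hq (fun z => z = _ ∨ z = _),
    exists_subtype_mem_iff hM hq (· = _), exists_subtype_mem_iff hM hq (· = _), ZFSet.eq_pair_iff]
  simp only [exists_eq_right, and_assoc]

theorem realize_emptyFm (hM : M.IsTransitive) (z : α ⊕ Fin k) :
    (emptyFm z).Realize v xs ↔ (Sum.elim v xs z).1 = ∅ := by
  rw [← forall_subtype_mem_iff_eq hM (Sum.elim v xs z).2 (by simp)]
  simp [emptyFm]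

theorem realize_tupTwoFm (hM : M.IsTransitive) (p u w : α ⊕ Fin k) :
    (tupTwoFm p u w).Realize v xs ↔
      (Sum.elim v xs p).1 = tup ![(Sum.elim v xs u).1, (Sum.elim v xs w).1] := by
  simp only [tupTwoFm, BoundedFormula.realize_ex, BoundedFormula.realize_inf,
    realize_pairFm hM, realize_emptyFm hM, elim_snoc_lift, elim_snoc_newVar, tup_two]
  constructor
  · rintro ⟨t, z, ⟨hp, ht⟩, hz⟩
    rw [hp, ht, hz]
  · intro hp
    have hwM := (hM.mem_of_pair_mem (hp ▸ (Sum.elim v xs p).2)).2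
    exact ⟨⟨_, hwM⟩, ⟨∅, (hM.mem_of_pair_mem hwM).2⟩, ⟨hp, rfl⟩, rfl⟩

theorem realize_fstDiagFm (hM : M.IsTransitive) (v : Fin 2 → {x : ZFSet // x ∈ M}) :
    RealizeIn {x : ZFSet // x ∈ M} (fun a b => a.1 ∈ b.1) fstDiagFm v ↔
      ∀ u w, tup ![u, w] ∈ (v 0).1 → tup ![u, u] ∈ (v 1).1 := by
  have hunfold : fstDiagFm.Realize v ↔ ∀ u w p : {x : ZFSet // x ∈ M},
      p.1 ∈ (v 0).1 → p.1 = tup ![u.1, w.1] →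
        ∃ q : {x : ZFSet // x ∈ M}, q.1 ∈ (v 1).1 ∧ q.1 = tup ![u.1, u.1] := by
    simp [fstDiagFm, Formula.Realize, realize_tupTwoFm hM, Fin.snoc]
  refine hunfold.trans ⟨fun h u w huw => ?_, fun h u w p hp hpt => ?_⟩
  · have htM := hM.mem_trans huw (v 0).2
    obtain ⟨hu, hw'⟩ := hM.mem_of_pair_mem htM
    obtain ⟨q, hq, hqt⟩ := h ⟨u, hu⟩ ⟨w, (hM.mem_of_pair_mem hw').1⟩ ⟨_, htM⟩ huw rfl
    exact hqt ▸ hq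
  · rw [hpt] at hp
    exact ⟨⟨_, hM.mem_trans (h _ _ hp) (v 1).2⟩, h _ _ hp, rfl⟩

end Transitive
end ZFFormula

open ZFFormula in
theorem fstDiag_transfer {A N : ZFSet} (hA : A.IsTransitive) (hN : N.IsTransitive)
    {j₀ : ZFSet → ZFSet} (hj : ∀ a ∈ A, j₀ a ∈ N)
    (helem : ∀ (n : ℕ) (φ : Lε.Formula (Fin n)) (v : Fin n → {x : ZFSet // x ∈ A}),
      RealizeIn {x : ZFSet // x ∈ A} (fun a b => a.1 ∈ b.1) φ v ↔
        RealizeIn {x : ZFSet // x ∈ N} (fun a b => a.1 ∈ b.1) φ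
          (fun i => ⟨j₀ (v i).1, hj (v i).1 (v i).2⟩))
    {X Y : ZFSet} (hX : X ∈ A) (hY : Y ∈ A) (h : ∀ u w, tup ![u, w] ∈ X → tup ![u, u] ∈ Y) :
    ∀ u w, tup ![u, w] ∈ j₀ X → tup ![u, u] ∈ j₀ Y :=
  (realize_fstDiagFm hN _).mp <|
    (helem 2 fstDiagFm ![⟨X, hX⟩, ⟨Y, hY⟩]).mp <| (realize_fstDiagFm hA _).mpr h

theorem claim_3_3_4_2_general
    (A N : ZFSet) (hA : A.IsTransitive) (hN : N.IsTransitive)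
    (j₀ : ZFSet → ZFSet) (hj : ∀ a ∈ A, j₀ a ∈ N)
    (helem : ∀ (n : ℕ) (φ : Lε.Formula (Fin n)) (v : Fin n → {x : ZFSet // x ∈ A}),
      RealizeIn {x : ZFSet // x ∈ A} (fun a b => a.1 ∈ b.1) φ v ↔
        RealizeIn {x : ZFSet // x ∈ N} (fun a b => a.1 ∈ b.1) φ
          (fun i => ⟨j₀ (v i).1, hj (v i).1 (v i).2⟩))
    (hpairA : ∀ a ∈ A, ∀ b ∈ A, ({a, b} : ZFSet) ∈ A)
    (hprodA : ∀ a ∈ A, ∀ b ∈ A, ZFSet.prod a b ∈ A)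
    (hsubA : ∀ s a : ZFSet, a ∈ A → s ⊆ a → s ∈ A)
 :
    ∀ f a g b : ZFSet, PiP A j₀ f a → PiP A j₀ g b → EP j₀ f a g b →
      (⋃₀ rng g : ZFSet) ∉ (⋃₀ rng g : ZFSet) ∧
      ∃ f₀ : ZFSet, IsZFFunc f₀ ∧ dom f₀ = dom f ∧
        (∀ u ∈ dom f₀, app f₀ u ∈ (⋃₀ rng g : ZFSet) ∪ {(⋃₀ rng g : ZFSet)}) ∧
        simP j₀ f₀ a f a := by
  rintro f a g b ⟨-, hfA, -⟩ ⟨hg, hgA, -⟩ hE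
  have h₀ : ({∅} : ZFSet) ∈ A := by
    simpa using hpairA _ (hA.empty_mem hfA) _ (hA.empty_mem hfA)
  have hSset (φ : Lε.Formula (Fin 2)) {h₁ h₂ : ZFSet} (h₁A : dom h₁ ∈ A) (h₂A : dom h₂ ∈ A) :
      Sset φ ![h₁, h₂] ∈ A :=
    Sset_mem h₀ hprodA hsubA φ (Fin.forall_fin_two.mpr ⟨h₁A, h₂A⟩)
  refine ⟨ZFSet.mem_irrefl _, clip f _, isZFFunc_graphOn _ _, dom_graphOn,
    fun _ hu => app_clip_mem hu, ?_⟩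
  exact fstDiag_transfer hA hN hj helem (hSset memFm hfA hgA) (hSset eqFm (dom_graphOn ▸ hfA) hfA)
    (fun _ _ => tup_diag_mem_Sset_eqFm_clip hg) a b hE

/-- Claim 3.3.4 (2) (set-likeness of `E`): if `⟨f,a⟩ E ⟨g,b⟩` in `Π` and
`s := ⋃ rng(g)`, then `s ∉ s`, and there is `f₀ ∈ 𝓕` with `dom f₀ = dom f`, taking all
its values in `s ∪ {s}`, such that `⟨f₀,a⟩ ∼ ⟨f,a⟩`. -/
theorem claim_3_3_4_2
    (A N : ZFSet) (hA : A.IsTransitive) (hN : N.IsTransitive)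
    (j₀ : ZFSet → ZFSet) (hj : ∀ a ∈ A, j₀ a ∈ N)
    (helem : ∀ (n : ℕ) (φ : Lε.Formula (Fin n)) (v : Fin n → {x : ZFSet // x ∈ A}),
      RealizeIn {x : ZFSet // x ∈ A} (fun a b => a.1 ∈ b.1) φ v ↔
        RealizeIn {x : ZFSet // x ∈ N} (fun a b => a.1 ∈ b.1) φ
          (fun i => ⟨j₀ (v i).1, hj (v i).1 (v i).2⟩))
    (hneA : ∃ a : ZFSet, a ∈ A)
    (hpairA : ∀ a ∈ A, ∀ b ∈ A, ({a, b} : ZFSet) ∈ A)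
    (hunionA : ∀ a ∈ A, (⋃₀ a : ZFSet) ∈ A)
    (hprodA : ∀ a ∈ A, ∀ b ∈ A, ZFSet.prod a b ∈ A)
    (hsubA : ∀ s a : ZFSet, a ∈ A → s ⊆ a → s ∈ A)
 :
    ∀ f a g b : ZFSet, PiP A j₀ f a → PiP A j₀ g b → EP j₀ f a g b →
      (⋃₀ rng g : ZFSet) ∉ (⋃₀ rng g : ZFSet) ∧
      ∃ f₀ : ZFSet, IsZFFunc f₀ ∧ dom f₀ = dom f ∧
        (∀ u ∈ dom f₀, app f₀ u ∈ (⋃₀ rng g : ZFSet) ∪ {(⋃₀ rng g : ZFSet)}) ∧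
        simP j₀ f₀ a f a :=
  claim_3_3_4_2_general A N hA hN j₀ hj helem hpairA hprodA hsubA
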